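/- Let U ⊆ ℝ^N be open, η^{ij} a constant symmetric invertible real N×N matrix, b_{sk} constant real numbers with b_{sk} = −b_{ks}, Φ : U → ℝ smooth, and define H^i(u) = Σ_s η^{is} ( (∂Φ/∂u^s)(u) − (1/2) Σ_k b_{sk} u^k ). Then the functions H^i satisfy system (ass1) at every point of U if and only if Φ satisfies the WDVV associativity equations at every point of U: Σ_{s,p} (∂³Φ/∂u^k∂u^i∂u^s) η^{sp} (∂³Φ/∂u^p∂u^j∂u^l) = Σ_{s,p} (∂³Φ/∂u^k∂u^j∂u^s) η^{sp} (∂³Φ/∂u^p∂u^i∂u^l) for all indices i,j,k,l. -/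

import Mathlib

/-- Partial derivative `∂f/∂u^s` of a function on `ℝ^N`. -/
noncomputable def pd {N : ℕ} (s : Fin N) (f : (Fin N → ℝ) → ℝ) (u : Fin N → ℝ) : ℝ :=
  fderiv ℝ f u (Pi.single s 1)

/-- Second partial derivative `∂²f/∂u^s∂u^k`. -/
noncomputable def pd2 {N : ℕ} (s k : Fin N) (f : (Fin N → ℝ) → ℝ) (u : Fin N → ℝ) : ℝ :=
  pd k (pd s f) u

/-- System (ass1) at the point `u`. -/
noncomputable def Ass1 {N : ℕ} (η : Matrix (Fin N) (Fin N) ℝ)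
    (H : Fin N → (Fin N → ℝ) → ℝ) (u : Fin N → ℝ) : Prop :=
  ∀ i j k l, ∑ s, ∑ p, pd2 k s (H i) u * η s p * pd2 p l (H j) u
    = ∑ s, ∑ p, pd2 k s (H j) u * η s p * pd2 p l (H i) u

/-- Third partial derivative `∂³f/∂u^a∂u^b∂u^c`. -/
noncomputable def pd3 {N : ℕ} (a b c : Fin N) (f : (Fin N → ℝ) → ℝ)
    (u : Fin N → ℝ) : ℝ :=
  pd c (pd b (pd a f)) u

variable {N : ℕ}

lemma contDiffAt_pd {f : (Fin N → ℝ) → ℝ} {u : Fin N → ℝ}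
    (hf : ContDiffAt ℝ (⊤ : ℕ∞) f u) (s : Fin N) : ContDiffAt ℝ (⊤ : ℕ∞) (pd s f) u := by
  have h := hf.fderiv_right (m := (⊤ : ℕ∞)) le_rfl
  exact ((ContinuousLinearMap.apply ℝ ℝ (Pi.single s 1)).contDiff.contDiffAt).comp u h

lemma pd_congr_nhds {f g : (Fin N → ℝ) → ℝ} {u : Fin N → ℝ} (s : Fin N)
    (h : f =ᶠ[nhds u] g) : pd s f u = pd s g u := by
  unfold pd; rw [h.fderiv_eq]

lemma pd2_comm {f : (Fin N → ℝ) → ℝ} {u : Fin N → ℝ}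
    (hf : ContDiffAt ℝ (⊤ : ℕ∞) f u) (a c : Fin N) : pd2 a c f u = pd2 c a f u := by
  have hsym : IsSymmSndFDerivAt ℝ f u := hf.isSymmSndFDerivAt (by rw [minSmoothness_of_isRCLikeNormedField]; exact WithTop.coe_le_coe.2 (le_top : (2 : ℕ∞) ≤ ⊤))
  have hd : DifferentiableAt ℝ (fderiv ℝ f) u :=
    (hf.fderiv_right (m := (⊤ : ℕ∞)) le_rfl).differentiableAt (by simp)
  have key : ∀ v w : Fin N → ℝ,
      fderiv ℝ (fun y => fderiv ℝ f y v) u w = fderiv ℝ (fderiv ℝ f) u w v := by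
    intro v w
    rw [fderiv_clm_apply hd (differentiableAt_const v)]
    simp
  show fderiv ℝ (fun y => fderiv ℝ f y (Pi.single a 1)) u (Pi.single c 1)
      = fderiv ℝ (fun y => fderiv ℝ f y (Pi.single c 1)) u (Pi.single a 1)
  rw [key, key]
  exact hsym _ _

lemma cAt {U : Set (Fin N → ℝ)} {Φ : (Fin N → ℝ) → ℝ} (hU : IsOpen U)
    (hΦ : ContDiffOn ℝ (⊤ : ℕ∞) Φ U) {u : Fin N → ℝ} (hu : u ∈ U) :
    ContDiffAt ℝ (⊤ : ℕ∞) Φ u := (hΦ u hu).contDiffAt (hU.mem_nhds hu)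

lemma pd3_swap23 {U : Set (Fin N → ℝ)} {Φ : (Fin N → ℝ) → ℝ} (hU : IsOpen U)
    (hΦ : ContDiffOn ℝ (⊤ : ℕ∞) Φ U) {u : Fin N → ℝ} (hu : u ∈ U) (a b c : Fin N) :
    pd3 a b c Φ u = pd3 a c b Φ u :=
  pd2_comm (contDiffAt_pd (cAt hU hΦ hu) a) b c

lemma pd3_swap12 {U : Set (Fin N → ℝ)} {Φ : (Fin N → ℝ) → ℝ} (hU : IsOpen U)
    (hΦ : ContDiffOn ℝ (⊤ : ℕ∞) Φ U) {u : Fin N → ℝ} (hu : u ∈ U) (a b c : Fin N) :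
    pd3 a b c Φ u = pd3 b a c Φ u := by
  refine pd_congr_nhds c (Filter.eventuallyEq_of_mem (hU.mem_nhds hu) ?_)
  intro v hv
  exact pd2_comm (cAt hU hΦ hv) a b

lemma pd_H {U : Set (Fin N → ℝ)} {Φ : (Fin N → ℝ) → ℝ} (hU : IsOpen U)
    (hΦ : ContDiffOn ℝ (⊤ : ℕ∞) Φ U) (η : Matrix (Fin N) (Fin N) ℝ)
    (b : Fin N → Fin N → ℝ) {H : Fin N → (Fin N → ℝ) → ℝ}
    (hHdef : ∀ i u, H i u = ∑ s, η i s * (pd s Φ u - (1 / 2) * ∑ k, b s k * u k))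
    {v : Fin N → ℝ} (hv : v ∈ U) (i a : Fin N) :
    pd a (H i) v = ∑ s, η i s * (pd2 s a Φ v - (1 / 2) * b s a) := by
  have hHfun : H i = fun w => ∑ s, η i s * (pd s Φ w - (1 / 2) * ∑ k, b s k * w k) :=
    funext fun w => hHdef i w
  set L : Fin N → (Fin N → ℝ) →L[ℝ] ℝ :=
    fun s => ∑ k, b s k • (ContinuousLinearMap.proj k : ((Fin N → ℝ)) →L[ℝ] ℝ) with hL
  have hlin : ∀ s, HasFDerivAt (fun w : Fin N → ℝ => ∑ k, b s k * w k) (L s) v := by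
    intro s
    exact HasFDerivAt.fun_sum fun k _ =>
      ((ContinuousLinearMap.proj k : ((Fin N → ℝ)) →L[ℝ] ℝ).hasFDerivAt (x := v)).const_mul
        (b s k)
  have hpds : ∀ s : Fin N, HasFDerivAt (pd s Φ) (fderiv ℝ (pd s Φ) v) v := by
    intro s
    exact ((contDiffAt_pd (cAt hU hΦ hv) s).differentiableAt
      (by simp)).hasFDerivAt
  have hD : HasFDerivAt (H i)
      (∑ s, η i s • (fderiv ℝ (pd s Φ) v - (1 / 2 : ℝ) • L s)) v := by
    rw [hHfun]
    exact HasFDerivAt.fun_sum fun s _ =>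
      (((hpds s).sub ((hlin s).const_smul (1 / 2 : ℝ))).const_mul (η i s))
  have hkey : pd a (H i) v = (∑ s, η i s • (fderiv ℝ (pd s Φ) v - (1 / 2 : ℝ) • L s))
      (Pi.single a 1) := by
    rw [show pd a (H i) v = fderiv ℝ (H i) v (Pi.single a 1) from rfl, hD.fderiv]
  rw [hkey, ContinuousLinearMap.sum_apply]
  refine Finset.sum_congr rfl fun s _ => ?_
  have hLa : L s (Pi.single a 1) = b s a := by
    rw [hL]
    simp [ContinuousLinearMap.sum_apply, Pi.single_apply]
  simp only [ContinuousLinearMap.smul_apply, ContinuousLinearMap.sub_apply, hLa,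
    smul_eq_mul]
  rfl

lemma pd2_H {U : Set (Fin N → ℝ)} {Φ : (Fin N → ℝ) → ℝ} (hU : IsOpen U)
    (hΦ : ContDiffOn ℝ (⊤ : ℕ∞) Φ U) (η : Matrix (Fin N) (Fin N) ℝ)
    (b : Fin N → Fin N → ℝ) {H : Fin N → (Fin N → ℝ) → ℝ}
    (hHdef : ∀ i u, H i u = ∑ s, η i s * (pd s Φ u - (1 / 2) * ∑ k, b s k * u k))
    {u : Fin N → ℝ} (hu : u ∈ U) (i a c : Fin N) :
    pd2 a c (H i) u = ∑ s, η i s * pd3 s a c Φ u := by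
  have hev : pd a (H i) =ᶠ[nhds u]
      fun v => ∑ s, η i s * (pd2 s a Φ v - (1 / 2) * b s a) :=
    Filter.eventuallyEq_of_mem (hU.mem_nhds hu) fun v hv => pd_H hU hΦ η b hHdef hv i a
  have h1 : pd2 a c (H i) u
      = pd c (fun v => ∑ s, η i s * (pd2 s a Φ v - (1 / 2) * b s a)) u :=
    pd_congr_nhds c hev
  rw [h1]
  have hdiff : ∀ s : Fin N, HasFDerivAt (pd2 s a Φ) (fderiv ℝ (pd2 s a Φ) u) u := by
    intro s
    exact ((contDiffAt_pd (contDiffAt_pd (cAt hU hΦ hu) s) a).differentiableAt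
      (by simp)).hasFDerivAt
  have hD : HasFDerivAt (fun v => ∑ s, η i s * (pd2 s a Φ v - (1 / 2) * b s a))
      (∑ s, η i s • fderiv ℝ (pd2 s a Φ) u) u :=
    HasFDerivAt.fun_sum fun s _ => (((hdiff s).sub_const _).const_mul (η i s))
  have hkey : pd c (fun v => ∑ s, η i s * (pd2 s a Φ v - (1 / 2) * b s a)) u
      = (∑ s, η i s • fderiv ℝ (pd2 s a Φ) u) (Pi.single c 1) := by
    rw [show pd c (fun v => ∑ s, η i s * (pd2 s a Φ v - (1 / 2) * b s a)) u
      = fderiv ℝ (fun v => ∑ s, η i s * (pd2 s a Φ v - (1 / 2) * b s a)) u (Pi.single c 1)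
      from rfl, hD.fderiv]
  rw [hkey, ContinuousLinearMap.sum_apply]
  refine Finset.sum_congr rfl fun s _ => ?_
  simp only [ContinuousLinearMap.smul_apply, smul_eq_mul]
  rfl

open Matrix in
lemma double_sum_eq (P η Q : Matrix (Fin N) (Fin N) ℝ) (i j : Fin N) :
    ∑ s, ∑ p, P i s * η s p * Q j p = (P * η * Qᵀ) i j := by
  have h : (P * η * Qᵀ) i j = ∑ p, ∑ s, P i s * η s p * Q j p := by
    simp [Matrix.mul_apply, Matrix.transpose_apply, Finset.sum_mul]
  rw [h, Finset.sum_comm]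

open Matrix in
lemma conj_symm_iff (η M : Matrix (Fin N) (Fin N) ℝ) (hηi : IsUnit η.det) :
    η * M * η = η * Mᵀ * η ↔ M = Mᵀ := by
  have e : ∀ X : Matrix (Fin N) (Fin N) ℝ, η⁻¹ * (η * X * η) * η⁻¹ = X := by
    intro X
    rw [Matrix.mul_assoc η X η, Matrix.nonsing_inv_mul_cancel_left _ _ hηi,
      Matrix.mul_nonsing_inv_cancel_right _ _ hηi]
  constructor
  · intro h
    have h2 := congrArg (fun X => η⁻¹ * X * η⁻¹) h
    simpa [e] using h2
  · intro h; rw [← h]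

open Matrix in
lemma conj_transpose_symm {N : ℕ} (η X : Matrix (Fin N) (Fin N) ℝ) (hηs : η.IsSymm) :
    (η * X * η)ᵀ = η * Xᵀ * η := by
  rw [Matrix.transpose_mul, Matrix.transpose_mul, hηs.eq, Matrix.mul_assoc]


open Matrix

/-- For `H^i = η^{is}(∂Φ/∂u^s − (1/2) b_{sk} u^k)` with antisymmetric constants
`b_{sk}`, system (ass1) holds on `U` iff the potential `Φ` satisfies the WDVV
associativity equations on `U`. -/
theorem stmt_13 {N : ℕ} (U : Set (Fin N → ℝ)) (hU : IsOpen U)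
    (η : Matrix (Fin N) (Fin N) ℝ) (hηs : η.IsSymm) (hηi : IsUnit η.det)
    (b : Fin N → Fin N → ℝ) (hb : ∀ s k, b s k = - b k s)
    (Φ : (Fin N → ℝ) → ℝ) (hΦ : ContDiffOn ℝ (⊤ : ℕ∞) Φ U)
    (H : Fin N → (Fin N → ℝ) → ℝ)
    (hHdef : ∀ i u, H i u
        = ∑ s, η i s * (pd s Φ u - (1 / 2) * ∑ k, b s k * u k)) :
    (∀ u ∈ U, Ass1 η H u) ↔
    (∀ u ∈ U, ∀ i j k l,
      ∑ s, ∑ p, pd3 k i s Φ u * η s p * pd3 p j l Φ u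
        = ∑ s, ∑ p, pd3 k j s Φ u * η s p * pd3 p i l Φ u) := by
  set A : (Fin N → ℝ) → Fin N → Matrix (Fin N) (Fin N) ℝ :=
    fun u k => Matrix.of fun a s => pd3 a k s Φ u with hA
  set B : (Fin N → ℝ) → Fin N → Matrix (Fin N) (Fin N) ℝ :=
    fun u l => Matrix.of fun c p => pd3 c p l Φ u with hB
  set M : (Fin N → ℝ) → Fin N → Fin N → Matrix (Fin N) (Fin N) ℝ :=
    fun u k l => A u k * η * (B u l)ᵀ with hM
  have key : ∀ u ∈ U, (Ass1 η H u ↔ ∀ i j k l,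
      ∑ s, ∑ p, pd3 k i s Φ u * η s p * pd3 p j l Φ u
        = ∑ s, ∑ p, pd3 k j s Φ u * η s p * pd3 p i l Φ u) := by
    intro u hu
    -- expansion of the LHS of Ass1
    have lhs_eq : ∀ i j k l : Fin N,
        ∑ s, ∑ p, pd2 k s (H i) u * η s p * pd2 p l (H j) u
          = (η * M u k l * η) i j := by
      intro i j k l
      have h1 : ∀ s, pd2 k s (H i) u = (η * A u k) i s := by
        intro s
        rw [pd2_H hU hΦ η b hHdef hu]
        simp [Matrix.mul_apply, hA]
      have h2 : ∀ p, pd2 p l (H j) u = (η * B u l) j p := by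
        intro p
        rw [pd2_H hU hΦ η b hHdef hu]
        simp [Matrix.mul_apply, hB]
      calc ∑ s, ∑ p, pd2 k s (H i) u * η s p * pd2 p l (H j) u
          = ∑ s, ∑ p, (η * A u k) i s * η s p * (η * B u l) j p := by
            simp only [h1, h2]
        _ = ((η * A u k) * η * (η * B u l)ᵀ) i j := double_sum_eq _ _ _ i j
        _ = (η * M u k l * η) i j := by
            rw [Matrix.transpose_mul, hηs.eq, hM]
            simp only [Matrix.mul_assoc]
    -- expansion of the WDVV sums
    have wd_eq : ∀ i j k l : Fin N,
        ∑ s, ∑ p, pd3 k i s Φ u * η s p * pd3 p j l Φ u = M u k l i j := by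
      intro i j k l
      have h1 : ∀ s, pd3 k i s Φ u = A u k i s := fun s => pd3_swap12 hU hΦ hu k i s
      have h2 : ∀ p, pd3 p j l Φ u = B u l j p := fun p => pd3_swap12 hU hΦ hu p j l
      calc ∑ s, ∑ p, pd3 k i s Φ u * η s p * pd3 p j l Φ u
          = ∑ s, ∑ p, A u k i s * η s p * B u l j p := by simp only [h1, h2]
        _ = (A u k * η * (B u l)ᵀ) i j := double_sum_eq _ _ _ i j
        _ = M u k l i j := by rw [hM]
    constructor
    · intro hass i j k l
      rw [wd_eq i j k l, wd_eq j i k l]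
      have hsymm : M u k l = (M u k l)ᵀ := by
        rw [← conj_symm_iff η (M u k l) hηi]
        apply Matrix.ext_iff.1
        intro i' j'
        have := hass i' j' k l
        rw [lhs_eq i' j' k l, lhs_eq j' i' k l] at this
        calc (η * M u k l * η) i' j' = (η * M u k l * η) j' i' := this
          _ = (η * (M u k l)ᵀ * η) i' j' := by
              rw [← conj_transpose_symm η (M u k l) hηs]
              rfl
      conv_lhs => rw [hsymm]
      rfl
    · intro hw i j k l
      rw [lhs_eq i j k l, lhs_eq j i k l]
      have hsymm : M u k l = (M u k l)ᵀ := by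
        apply Matrix.ext_iff.1
        intro i' j'
        have := hw i' j' k l
        rw [wd_eq i' j' k l, wd_eq j' i' k l] at this
        exact this
      have : η * M u k l * η = (η * M u k l * η)ᵀ := by
        rw [conj_transpose_symm η (M u k l) hηs, ← hsymm]
      calc (η * M u k l * η) i j = (η * M u k l * η)ᵀ j i := rfl
        _ = (η * M u k l * η) j i := by rw [← this]
  constructor
  · intro h u hu; exact (key u hu).1 (h u hu)
  · intro h u hu; exact (key u hu).2 (h u hu)
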